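/- arXiv:2505.22237 — 4 statements merged into one kernel-verified Lean document; each statement's English description precedes it below -/
import Mathlib

section
/- Let F be a field of characteristic 2, let a ∈ F and b ∈ Fˣ. The quaternion algebra [a,b)_F is split (i.e., isomorphic as an F-algebra to the algebra of 2×2 matrices over F) if and only if there exist λ, μ ∈ F such that a = λ² + λ + μ²·b. -/
open FreeAlgebra in
inductive QuatRel (F : Type*) [Field F] (a b : F) :
    FreeAlgebra F (Fin 2) → FreeAlgebra F (Fin 2) → Prop
  | u_sq : QuatRel F a b (ι F 0 * ι F 0 - ι F 0) (algebraMap F _ a)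
  | v_sq : QuatRel F a b (ι F 1 * ι F 1) (algebraMap F _ b)
  | vu : QuatRel F a b (ι F 1 * ι F 0) ((1 - ι F 0) * ι F 1)

/-- The quaternion algebra `[a,b)_F` over a field of characteristic `2`:
generated by `u, v` with `u² - u = a`, `v² = b`, `vu = (1-u)v`. -/
def QuatAlg (F : Type*) [Field F] (a b : F) : Type _ :=
  RingQuot (QuatRel F a b)

instance (F : Type*) [Field F] (a b : F) : Ring (QuatAlg F a b) :=
  inferInstanceAs (Ring (RingQuot (QuatRel F a b)))

instance (F : Type*) [Field F] (a b : F) : Algebra F (QuatAlg F a b) :=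
  inferInstanceAs (Algebra F (RingQuot (QuatRel F a b)))

/-!
The presentation `[a,b)_F` is the quaternion algebra `ℍ[F,a,1,b]`. In characteristic 2 its
norm `q̄ q` is the form `φ(x,y) + b φ(z,w)` with `φ(x,y) = x² + xy + ay²`, the norm form of
`F[t]/(t² + t + a)`. A split algebra has nonzero zero divisors, and these have norm zero; since `φ`
is multiplicative, an isotropic vector of the norm yields `a = l² + l + m² b`. Conversely, such
`l, m` give matrices `i = [[l, bm], [m, l+1]]` and `j = [[0, b], [1, 0]]` satisfying the defining
relations, and the induced map `ℍ[F,a,1,b] → M₂(F)` is injective, hence bijective by dimension.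
-/

open Quaternion

section NormForm

theorem norm_form_mul {R : Type*} [CommRing R] (a x y z w : R) :
    (x ^ 2 + x * y + a * y ^ 2) * (z ^ 2 + z * w + a * w ^ 2) =
      (x * z - a * y * w) ^ 2 + (x * z - a * y * w) * (x * w + y * z + y * w) +
        a * (x * w + y * z + y * w) ^ 2 := by
  ring

variable {F : Type*} [Field F] [CharP F 2] {a b : F}

theorem exists_eq_sq_add_self_of_norm_form_eq_zero {x y : F} (hxy : ¬(x = 0 ∧ y = 0))
    (h : x ^ 2 + x * y + a * y ^ 2 = 0) : ∃ l : F, a = l ^ 2 + l := by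
  have hy : y ≠ 0 := by
    rintro rfl
    exact hxy ⟨pow_eq_zero_iff two_ne_zero |>.mp (by simpa using h), rfl⟩
  refine ⟨x / y, ?_⟩
  field_simp
  linear_combination h - (x ^ 2 + x * y) * CharTwo.two_eq_zero (R := F)

theorem exists_eq_of_norm_form_eq_mul_sq (hb : b ≠ 0) {s t c : F} (hc : c ≠ 0)
    (h : s ^ 2 + s * t + a * t ^ 2 = b * c ^ 2) : ∃ l m : F, a = l ^ 2 + l + m ^ 2 * b := by
  have h2 : (2 : F) = 0 := CharTwo.two_eq_zero
  by_cases ht : t = 0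
  · subst ht
    have hs : s ≠ 0 := by
      rintro rfl
      simp_all
    -- `b = (s / c) ^ 2` is a square, and `a = a ^ 2 + a + a ^ 2` in characteristic 2
    refine ⟨a, a * c / s, ?_⟩
    field_simp
    linear_combination a ^ 2 * h - a ^ 2 * s ^ 2 * h2
  · refine ⟨s / t, c / t, ?_⟩
    field_simp
    linear_combination h - (s ^ 2 + s * t) * h2

theorem exists_eq_of_isotropic (hb : b ≠ 0) {x y z w : F}
    (hne : ¬(x = 0 ∧ y = 0 ∧ z = 0 ∧ w = 0))
    (h : x ^ 2 + x * y + a * y ^ 2 + b * (z ^ 2 + z * w + a * w ^ 2) = 0) :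
    ∃ l m : F, a = l ^ 2 + l + m ^ 2 * b := by
  by_cases hzw : z ^ 2 + z * w + a * w ^ 2 = 0
  · by_cases hz : z = 0 ∧ w = 0
    · obtain ⟨l, hl⟩ := exists_eq_sq_add_self_of_norm_form_eq_zero (x := x) (y := y)
        (by tauto) (by simpa [hz.1, hz.2] using h)
      exact ⟨l, 0, by simpa using hl⟩
    · obtain ⟨l, hl⟩ := exists_eq_sq_add_self_of_norm_form_eq_zero hz hzw
      exact ⟨l, 0, by simpa using hl⟩
  · -- `φ(x,y) φ(z,w) = b φ(z,w)²`, and the left side is again a value of `φ`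
    refine exists_eq_of_norm_form_eq_mul_sq hb hzw (s := x * z - a * y * w)
      (t := x * w + y * z + y * w) ?_
    rw [← norm_form_mul]
    linear_combination (z ^ 2 + z * w + a * w ^ 2) * h
      - b * (z ^ 2 + z * w + a * w ^ 2) ^ 2 * CharTwo.two_eq_zero (R := F)

end NormForm

namespace QuaternionAlgebra

theorem re_star_mul_self {R : Type*} [CommRing R] {c₁ c₂ c₃ : R} (q : ℍ[R,c₁,c₂,c₃]) :
    (star q * q).re = q.re ^ 2 + c₂ * q.re * q.imI - c₁ * q.imI ^ 2
      - c₃ * (q.imJ ^ 2 + c₂ * q.imJ * q.imK - c₁ * q.imK ^ 2) := by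
  simp only [re_mul, re_star, imI_star, imJ_star, imK_star]
  ring

theorem re_star_mul_self_eq_zero_of_mul_eq_zero {K : Type*} [Field K] {c₁ c₂ c₃ : K}
    {p q : ℍ[K,c₁,c₂,c₃]} (hqp : q * p = 0) (hp : p ≠ 0) : (star q * q).re = 0 := by
  have h : (star q * q) * p = 0 := by rw [mul_assoc, hqp, mul_zero]
  rw [star_mul_eq_coe, coe_mul_eq_smul, smul_eq_zero] at h
  exact h.resolve_right hp

end QuaternionAlgebra

namespace QuatAlg

variable (F : Type*) [Field F] (a b : F)

def mk : FreeAlgebra F (Fin 2) →ₐ[F] QuatAlg F a b := RingQuot.mkAlgHom F (QuatRel F a b)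

variable {F a b} in
theorem mk_eq_mk_of_rel {x y : FreeAlgebra F (Fin 2)} (h : QuatRel F a b x y) :
    mk F a b x = mk F a b y :=
  RingQuot.mkAlgHom_rel F h

def quaternionBasis : QuaternionAlgebra.Basis (QuatAlg F a b) a 1 b where
  i := mk F a b (FreeAlgebra.ι F 0)
  j := mk F a b (FreeAlgebra.ι F 1)
  k := mk F a b (FreeAlgebra.ι F 0 * FreeAlgebra.ι F 1)
  i_mul_i := by
    have h := mk_eq_mk_of_rel (QuatRel.u_sq (F := F) (a := a) (b := b))
    rw [map_sub, map_mul, AlgHom.commutes, Algebra.algebraMap_eq_smul_one] at h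
    rw [one_smul, ← sub_eq_iff_eq_add, h]
  j_mul_j := by
    have h := mk_eq_mk_of_rel (QuatRel.v_sq (F := F) (a := a) (b := b))
    rwa [map_mul, AlgHom.commutes, Algebra.algebraMap_eq_smul_one] at h
  i_mul_j := (map_mul _ _ _).symm
  j_mul_i := by
    have h := mk_eq_mk_of_rel (QuatRel.vu (F := F) (a := a) (b := b))
    rw [← map_mul, h, map_mul, map_sub, map_one, map_mul, sub_mul, one_mul, one_smul]

def toQuaternion : QuatAlg F a b →ₐ[F] ℍ[F,a,1,b] :=
  RingQuot.liftAlgHom F ⟨FreeAlgebra.lift F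
    ![(QuaternionAlgebra.Basis.self F).i, (QuaternionAlgebra.Basis.self F).j], by
      rintro _ _ (_ | _ | _) <;> ext <;> simp⟩

theorem toQuaternion_mk_ι (i : Fin 2) :
    toQuaternion F a b (mk F a b (FreeAlgebra.ι F i)) =
      ![(QuaternionAlgebra.Basis.self F).i, (QuaternionAlgebra.Basis.self F).j] i :=
  (RingQuot.liftAlgHom_mkAlgHom_apply F _ _ _).trans (FreeAlgebra.lift_ι_apply _ _)

def equivQuaternion : QuatAlg F a b ≃ₐ[F] ℍ[F,a,1,b] :=
  AlgEquiv.ofAlgHom (toQuaternion F a b) (quaternionBasis F a b).liftHom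
    (QuaternionAlgebra.hom_ext
      (by simpa [QuaternionAlgebra.Basis.lift, quaternionBasis] using toQuaternion_mk_ι F a b 0)
      (by simpa [QuaternionAlgebra.Basis.lift, quaternionBasis] using toQuaternion_mk_ι F a b 1))
    (RingQuot.ringQuot_ext' F _ _ (FreeAlgebra.hom_ext (funext fun i => by
      change (quaternionBasis F a b).liftHom (toQuaternion F a b (mk F a b (FreeAlgebra.ι F i))) =
        mk F a b (FreeAlgebra.ι F i)
      rw [toQuaternion_mk_ι]
      fin_cases i <;> simp [QuaternionAlgebra.Basis.lift, quaternionBasis])))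

end QuatAlg

theorem Matrix.single_ne_zero {m n α : Type*} [DecidableEq m] [DecidableEq n] [Zero α]
    (i : m) (j : n) {c : α} (hc : c ≠ 0) : Matrix.single i j c ≠ 0 :=
  fun h => hc (by simpa using congrFun₂ h i j)

section Split

variable {F : Type*} [Field F] [CharP F 2] {a b : F}

open Matrix in
theorem exists_eq_of_algEquiv_matrix (hb : b ≠ 0)
    (ψ : ℍ[F,a,1,b] ≃ₐ[F] Matrix (Fin 2) (Fin 2) F) :
    ∃ l m : F, a = l ^ 2 + l + m ^ 2 * b := by
  set q := ψ.symm (single 0 0 1)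
  set p := ψ.symm (single 1 1 1)
  have hqp : q * p = 0 := by simp [q, p, ← map_mul]
  have hp : p ≠ 0 := by simpa [p] using single_ne_zero 1 1 one_ne_zero
  have hq : q ≠ 0 := by simpa [q] using single_ne_zero 0 0 one_ne_zero
  have hnorm := QuaternionAlgebra.re_star_mul_self_eq_zero_of_mul_eq_zero hqp hp
  rw [QuaternionAlgebra.re_star_mul_self] at hnorm
  refine exists_eq_of_isotropic hb (x := q.re) (y := q.imI) (z := q.imJ) (w := q.imK) ?_ ?_
  · rintro ⟨h₁, h₂, h₃, h₄⟩
    exact hq (QuaternionAlgebra.ext h₁ h₂ h₃ h₄)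
  · linear_combination hnorm + (a * q.imI ^ 2 + b * q.imJ ^ 2 + b * q.imJ * q.imK) *
      CharTwo.two_eq_zero (R := F)

variable (b) in
def matrixBasis (l m : F) :
    QuaternionAlgebra.Basis (Matrix (Fin 2) (Fin 2) F) (l ^ 2 + l + m ^ 2 * b) 1 b where
  i := !![l, b * m; m, l + 1]
  j := !![0, b; 1, 0]
  k := !![b * m, b * l; l + 1, b * m]
  i_mul_i := by
    ext i j
    fin_cases i <;> fin_cases j <;> simp <;> grind
  j_mul_j := by
    ext i j
    fin_cases i <;> fin_cases j <;> simp
  i_mul_j := by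
    ext i j
    fin_cases i <;> fin_cases j <;> simp <;> ring
  j_mul_i := by
    ext i j
    fin_cases i <;> fin_cases j <;> simp <;> grind

theorem matrixBasis_liftHom_injective (hb : b ≠ 0) (l m : F) :
    Function.Injective (matrixBasis b l m).liftHom := by
  refine (injective_iff_map_eq_zero _).mpr fun q hq => ?_
  have h₀₀ := congrFun₂ hq 0 0
  have h₀₁ := congrFun₂ hq 0 1
  have h₁₀ := congrFun₂ hq 1 0
  have h₁₁ := congrFun₂ hq 1 1
  simp [matrixBasis, QuaternionAlgebra.Basis.lift, Matrix.algebraMap_matrix_apply]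
    at h₀₀ h₀₁ h₁₀ h₁₁
  have hy : q.imI = 0 := by linear_combination h₁₁ - h₀₀
  have hzw : q.imJ + q.imK * l = 0 := by
    have h : b * (q.imJ + q.imK * l) = 0 := by linear_combination h₀₁ - b * m * hy
    exact (mul_eq_zero.mp h).resolve_left hb
  have hw : q.imK = 0 := by linear_combination h₁₀ - hzw - m * hy
  have hz : q.imJ = 0 := by linear_combination hzw - l * hw
  have hx : q.re = 0 := by linear_combination h₀₀ - l * hy - b * m * hw
  exact QuaternionAlgebra.ext hx hy hz hw

theorem quaternionAlgebra_nonempty_algEquiv_matrix_iff (hb : b ≠ 0) :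
    Nonempty (ℍ[F,a,1,b] ≃ₐ[F] Matrix (Fin 2) (Fin 2) F) ↔
      ∃ l m : F, a = l ^ 2 + l + m ^ 2 * b := by
  refine ⟨fun ⟨ψ⟩ => exists_eq_of_algEquiv_matrix hb ψ, ?_⟩
  rintro ⟨l, m, rfl⟩
  have hinj := matrixBasis_liftHom_injective hb l m
  have hrank : Module.finrank F ℍ[F,l ^ 2 + l + m ^ 2 * b,1,b] =
      Module.finrank F (Matrix (Fin 2) (Fin 2) F) := by
    simp [QuaternionAlgebra.finrank_eq_four, Module.finrank_matrix]
  exact ⟨.ofBijective _ ⟨hinj,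
    (LinearMap.injective_iff_surjective_of_finrank_eq_finrank hrank
      (f := (matrixBasis b l m).liftHom.toLinearMap)).mp hinj⟩⟩

end Split

theorem stmt0 (F : Type*) [Field F] [CharP F 2] (a b : F) (hb : b ≠ 0) :
    Nonempty (QuatAlg F a b ≃ₐ[F] Matrix (Fin 2) (Fin 2) F) ↔
      ∃ l m : F, a = l ^ 2 + l + m ^ 2 * b :=
  ((QuatAlg.equivQuaternion F a b).equivCongr AlgEquiv.refl).nonempty_congr.trans
    (quaternionAlgebra_nonempty_algEquiv_matrix_iff hb)
end

section
/- Let F be a field of characteristic 2, let a₁, a₂ ∈ F and b₁, b₂ ∈ Fˣ. Then there is an isomorphism of F-algebras [a₁,b₁)_F ⊗_F [a₂,b₂)_F ≅ [a₁,b₁b₂)_F ⊗_F [a₁+a₂,b₂)_F. -/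
open scoped TensorProduct

/-!
Write `u, v` and `u', v'` for the generators of the two factors of `[a, b) ⊗ [a', b')`; they
commute with each other. For `c ∈ F` the pair `u, c • v v'` satisfies the relations of
`[a, c²bb')`, and `u + u', v'` those of `[a + a', b')`: the cross term `u u' + u' u = 2 u u'`
vanishes in characteristic `2`. The two new pairs commute again, which gives an algebra map
`tensorMix c : [a, c²bb') ⊗ [a + a', b') → [a, b) ⊗ [a', b')`. Applying the construction
twice, with `c` and `c'`, sends `v ↦ c c' b' • v` and `u' ↦ u + u + u' = u'`, so
`tensorMix 1` and `tensorMix b'⁻¹` are mutually inverse.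
-/

section

theorem CharTwo.add_self_eq_zero_of_module (F : Type*) [Semiring F] [CharP F 2]
    {M : Type*} [AddCommMonoid M] [Module F M] (x : M) : x + x = 0 := by
  rw [← two_smul F x, CharTwo.two_eq_zero, zero_smul]

theorem CharTwo.neg_eq_of_module (F : Type*) [Ring F] [CharP F 2]
    {M : Type*} [AddCommGroup M] [Module F M] (x : M) : -x = x :=
  neg_eq_of_add_eq_zero_left (add_self_eq_zero_of_module F x)

variable {F : Type*} [Field F] {A : Type*} [Ring A] [Algebra F A]

structure IsQuatPair (a b : F) (x y : A) : Prop where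
  x_mul_x_sub_x : x * x - x = algebraMap F A a
  y_mul_y : y * y = algebraMap F A b
  y_mul_x : y * x = (1 - x) * y

namespace IsQuatPair

variable {a b a' b' : F} {x y x' y' : A}

theorem map {B : Type*} [Ring B] [Algebra F B] (h : IsQuatPair a b x y) (φ : A →ₐ[F] B) :
    IsQuatPair a b (φ x) (φ y) where
  x_mul_x_sub_x := by rw [← map_mul, ← map_sub, h.x_mul_x_sub_x, φ.commutes]
  y_mul_y := by rw [← map_mul, h.y_mul_y, φ.commutes]
  y_mul_x := by rw [← map_mul, h.y_mul_x, map_mul, map_sub, map_one]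

theorem mul_y_mul_y (h : IsQuatPair a b x y) (z : A) : z * y * y = b • z := by
  rw [mul_assoc, h.y_mul_y, ← Algebra.commutes, Algebra.smul_def]

theorem smul_mul (h : IsQuatPair a b x y) (h' : IsQuatPair a' b' x' y')
    (hxy' : Commute x y') (hyy' : Commute y y') (c : F) :
    IsQuatPair a (c * c * (b * b')) x (c • (y * y')) where
  x_mul_x_sub_x := h.x_mul_x_sub_x
  y_mul_y := by
    rw [smul_mul_smul_comm, hyy'.symm.mul_mul_mul_comm, h.y_mul_y, h'.y_mul_y, ← map_mul,
      Algebra.smul_def, ← map_mul]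
  y_mul_x := by
    rw [smul_mul_assoc, mul_assoc, ← hxy'.eq, ← mul_assoc, h.y_mul_x, mul_assoc,
      mul_smul_comm]

variable [CharP F 2]

theorem add (h : IsQuatPair a b x y) (h' : IsQuatPair a' b' x' y')
    (hxx' : Commute x x') (hxy' : Commute x y') :
    IsQuatPair (a + a') b' (x + x') y' where
  x_mul_x_sub_x := calc
    (x + x') * (x + x') - (x + x') = (x * x - x) + (x' * x' - x') + (x * x' + x' * x) := by
      noncomm_ring
    _ = algebraMap F A (a + a') := by
      rw [← hxx'.eq, CharTwo.add_self_eq_zero_of_module F, add_zero, h.x_mul_x_sub_x,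
        h'.x_mul_x_sub_x, map_add]
  y_mul_y := h'.y_mul_y
  y_mul_x := calc
    y' * (x + x') = (1 - x - x') * y' + (x * y' + x * y') := by
      rw [mul_add, ← hxy'.eq, h'.y_mul_x]; noncomm_ring
    _ = (1 - (x + x')) * y' := by
      rw [CharTwo.add_self_eq_zero_of_module F, add_zero, sub_add_eq_sub_sub]

theorem commute_smul_mul_add (h : IsQuatPair a b x y) (h' : IsQuatPair a' b' x' y')
    (hxy' : Commute x y') (hyx' : Commute y x') (c : F) :
    Commute (c • (y * y')) (x + x') := by
  have key : y * y' * (x + x') = (x + x') * (y * y') := calc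
    y * y' * (x + x') = ((1 + 1) + -x + -x') * (y * y') := by
      rw [mul_add, mul_assoc y y' x, ← hxy'.eq, ← mul_assoc, h.y_mul_x, mul_assoc y y' x',
        h'.y_mul_x, ← mul_assoc, ((Commute.one_right y).sub_right hyx').eq]
      noncomm_ring
    _ = (x + x') * (y * y') := by
      rw [CharTwo.add_self_eq_zero_of_module F, CharTwo.neg_eq_of_module F,
        CharTwo.neg_eq_of_module F, zero_add]
  rw [Commute, SemiconjBy, smul_mul_assoc, key, mul_smul_comm]

end IsQuatPair

theorem Algebra.TensorProduct.commute_tmul_one_one_tmul {B : Type*} [Ring B] [Algebra F B]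
    (p : A) (q : B) :
    Commute (p ⊗ₜ[F] (1 : B)) (1 ⊗ₜ q) :=
  (Commute.one_right p).tmul (Commute.one_left q)

namespace QuatAlg

variable {a b a' b' : F}

def u : QuatAlg F a b := RingQuot.mkAlgHom F (QuatRel F a b) (FreeAlgebra.ι F 0)

def v : QuatAlg F a b := RingQuot.mkAlgHom F (QuatRel F a b) (FreeAlgebra.ι F 1)

theorem isQuatPair_u_v : IsQuatPair a b (u : QuatAlg F a b) v := by
  have hu := RingQuot.mkAlgHom_rel F (QuatRel.u_sq (F := F) (a := a) (b := b))
  have hv := RingQuot.mkAlgHom_rel F (QuatRel.v_sq (F := F) (a := a) (b := b))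
  have hvu := RingQuot.mkAlgHom_rel F (QuatRel.vu (F := F) (a := a) (b := b))
  simp only [map_sub, map_mul, map_one, AlgHom.commutes] at hu hv hvu
  exact ⟨hu, hv, hvu⟩

variable {x y : A}

def lift (h : IsQuatPair a b x y) : QuatAlg F a b →ₐ[F] A :=
  RingQuot.liftAlgHom F ⟨FreeAlgebra.lift F ![x, y], by
    rintro _ _ ⟨⟩ <;> simp [h.x_mul_x_sub_x, h.y_mul_y, h.y_mul_x]⟩

@[simp]
theorem lift_u (h : IsQuatPair a b x y) : lift h u = x :=
  (RingQuot.liftAlgHom_mkAlgHom_apply _ _ _ _).trans (FreeAlgebra.lift_ι_apply _ _)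

@[simp]
theorem lift_v (h : IsQuatPair a b x y) : lift h v = y :=
  (RingQuot.liftAlgHom_mkAlgHom_apply _ _ _ _).trans (FreeAlgebra.lift_ι_apply _ _)

theorem algHom_ext {φ ψ : QuatAlg F a b →ₐ[F] A} (hu : φ u = ψ u) (hv : φ v = ψ v) :
    φ = ψ := by
  refine RingQuot.ringQuot_ext' _ _ _ (FreeAlgebra.hom_ext (funext fun i => ?_))
  fin_cases i
  exacts [hu, hv]

theorem adjoin_u_v : Algebra.adjoin F {u, v} = (⊤ : Subalgebra F (QuatAlg F a b)) := by
  rw [eq_top_iff]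
  rintro z -
  obtain ⟨p, rfl⟩ := RingQuot.mkAlgHom_surjective F _ z
  have hp : p ∈ Algebra.adjoin F (Set.range (FreeAlgebra.ι F)) := by
    rw [FreeAlgebra.adjoin_range_ι]; trivial
  refine Algebra.adjoin_mono ?_ (Algebra.adjoin_image F (RingQuot.mkAlgHom F (QuatRel F a b)) _ ▸
    Subalgebra.mem_map.2 ⟨p, hp, rfl⟩)
  rintro _ ⟨_, ⟨i, rfl⟩, rfl⟩
  fin_cases i
  exacts [Or.inl rfl, Or.inr rfl]

theorem commute_of_commute_u_v (φ : QuatAlg F a b →ₐ[F] A) {c : A}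
    (hu : Commute (φ u) c) (hv : Commute (φ v) c) (z : QuatAlg F a b) : Commute (φ z) c := by
  have hz : φ z ∈ Algebra.adjoin F {φ u, φ v} := by
    rw [← Set.image_pair, ← AlgHom.map_adjoin, adjoin_u_v]
    exact ⟨z, trivial, rfl⟩
  refine (Algebra.commute_of_mem_adjoin_of_forall_mem_commute hz ?_).symm
  rintro _ (rfl | rfl)
  exacts [hu.symm, hv.symm]

variable {x' y' : A}

def tensorLift (h : IsQuatPair a b x y) (h' : IsQuatPair a' b' x' y')
    (hxx' : Commute x x') (hxy' : Commute x y') (hyx' : Commute y x') (hyy' : Commute y y') :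
    QuatAlg F a b ⊗[F] QuatAlg F a' b' →ₐ[F] A :=
  Algebra.TensorProduct.lift (lift h) (lift h') fun z w =>
    commute_of_commute_u_v _
      (commute_of_commute_u_v (lift h') (by simpa using hxx'.symm)
        (by simpa using hxy'.symm) w).symm
      (commute_of_commute_u_v (lift h') (by simpa using hyx'.symm)
        (by simpa using hyy'.symm) w).symm z

section tensorLift

variable (h : IsQuatPair a b x y) (h' : IsQuatPair a' b' x' y')
  (hxx' : Commute x x') (hxy' : Commute x y') (hyx' : Commute y x') (hyy' : Commute y y')

@[simp]
theorem tensorLift_u_tmul_one : tensorLift h h' hxx' hxy' hyx' hyy' (u ⊗ₜ 1) = x := by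
  simp [tensorLift]

@[simp]
theorem tensorLift_v_tmul_one : tensorLift h h' hxx' hxy' hyx' hyy' (v ⊗ₜ 1) = y := by
  simp [tensorLift]

@[simp]
theorem tensorLift_one_tmul_u : tensorLift h h' hxx' hxy' hyx' hyy' (1 ⊗ₜ u) = x' := by
  simp [tensorLift]

@[simp]
theorem tensorLift_one_tmul_v : tensorLift h h' hxx' hxy' hyx' hyy' (1 ⊗ₜ v) = y' := by
  simp [tensorLift]

end tensorLift

theorem tensorProduct_algHom_ext {φ ψ : QuatAlg F a b ⊗[F] QuatAlg F a' b' →ₐ[F] A}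
    (hu : φ (u ⊗ₜ 1) = ψ (u ⊗ₜ 1)) (hv : φ (v ⊗ₜ 1) = ψ (v ⊗ₜ 1))
    (hu' : φ (1 ⊗ₜ u) = ψ (1 ⊗ₜ u)) (hv' : φ (1 ⊗ₜ v) = ψ (1 ⊗ₜ v)) : φ = ψ :=
  Algebra.TensorProduct.ext (algHom_ext hu hv) (algHom_ext hu' hv')

theorem isQuatPair_u_tmul_one :
    IsQuatPair a b ((u : QuatAlg F a b) ⊗ₜ[F] (1 : QuatAlg F a' b'))
      ((v : QuatAlg F a b) ⊗ₜ[F] (1 : QuatAlg F a' b')) :=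
  isQuatPair_u_v.map Algebra.TensorProduct.includeLeft

theorem isQuatPair_one_tmul_u :
    IsQuatPair a' b' ((1 : QuatAlg F a b) ⊗ₜ[F] (u : QuatAlg F a' b'))
      ((1 : QuatAlg F a b) ⊗ₜ[F] (v : QuatAlg F a' b')) :=
  isQuatPair_u_v.map (Algebra.TensorProduct.includeRight (A := QuatAlg F a b))

variable [CharP F 2]

open Algebra.TensorProduct (commute_tmul_one_one_tmul)

def tensorMix (c : F) {d e : F} (hd : c * c * (b * b') = d) (he : a + a' = e) :
    QuatAlg F a d ⊗[F] QuatAlg F e b' →ₐ[F] QuatAlg F a b ⊗[F] QuatAlg F a' b' :=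
  tensorLift (hd ▸ isQuatPair_u_tmul_one.smul_mul isQuatPair_one_tmul_u
      (commute_tmul_one_one_tmul _ _) (commute_tmul_one_one_tmul _ _) c)
    (he ▸ isQuatPair_u_tmul_one.add isQuatPair_one_tmul_u
      (commute_tmul_one_one_tmul _ _) (commute_tmul_one_one_tmul _ _))
    ((Commute.refl _).add_right (commute_tmul_one_one_tmul _ _))
    (commute_tmul_one_one_tmul _ _)
    (isQuatPair_u_tmul_one.commute_smul_mul_add isQuatPair_one_tmul_u
      (commute_tmul_one_one_tmul _ _) (commute_tmul_one_one_tmul _ _) c)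
    (((commute_tmul_one_one_tmul _ _).mul_left (Commute.refl _)).smul_left c)

section tensorMix

variable (c : F) {d e : F} (hd : c * c * (b * b') = d) (he : a + a' = e)

@[simp]
theorem tensorMix_u_tmul_one : tensorMix c hd he (u ⊗ₜ 1) = u ⊗ₜ 1 :=
  tensorLift_u_tmul_one ..

@[simp]
theorem tensorMix_v_tmul_one : tensorMix c hd he (v ⊗ₜ 1) = c • (v ⊗ₜ 1 * 1 ⊗ₜ v) :=
  tensorLift_v_tmul_one ..

@[simp]
theorem tensorMix_one_tmul_u : tensorMix c hd he (1 ⊗ₜ u) = u ⊗ₜ 1 + 1 ⊗ₜ u :=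
  tensorLift_one_tmul_u ..

@[simp]
theorem tensorMix_one_tmul_v : tensorMix c hd he (1 ⊗ₜ v) = 1 ⊗ₜ v :=
  tensorLift_one_tmul_v ..

end tensorMix

theorem tensorMix_comp_tensorMix {c c' d e : F} (hc : c' * c * b' = 1)
    (hd : c * c * (b * b') = d) (he : a + a' = e)
    (hd' : c' * c' * (d * b') = b) (he' : a + e = a') :
    (tensorMix c hd he).comp (tensorMix c' hd' he') = AlgHom.id F _ := by
  apply tensorProduct_algHom_ext <;>
    simp only [AlgHom.comp_apply, AlgHom.id_apply, tensorMix_u_tmul_one, tensorMix_v_tmul_one,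
      tensorMix_one_tmul_u, tensorMix_one_tmul_v, map_add, map_smul, map_mul, smul_mul_assoc,
      ← mul_assoc, isQuatPair_one_tmul_u.mul_y_mul_y, smul_smul, hc, one_smul, ← add_assoc,
      CharTwo.add_self_eq_zero_of_module F, zero_add]

end QuatAlg

end

theorem stmt1_general (F : Type*) [Field F] [CharP F 2] (a₁ a₂ : F) (b₁ b₂ : F)
    (hb₂ : b₂ ≠ 0) :
    Nonempty ((QuatAlg F a₁ b₁ ⊗[F] QuatAlg F a₂ b₂) ≃ₐ[F]
      (QuatAlg F a₁ (b₁ * b₂) ⊗[F] QuatAlg F (a₁ + a₂) b₂)) := by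
  have hd : 1 * 1 * (b₁ * b₂) = b₁ * b₂ := by rw [mul_one, one_mul]
  have he : a₁ + a₂ = a₁ + a₂ := rfl
  have hd' : b₂⁻¹ * b₂⁻¹ * (b₁ * b₂ * b₂) = b₁ := by field_simp
  have he' : a₁ + (a₁ + a₂) = a₂ := CharTwo.add_cancel_left a₁ a₂
  have hc : b₂⁻¹ * 1 * b₂ = 1 := by rw [mul_one, inv_mul_cancel₀ hb₂]
  have hc' : 1 * b₂⁻¹ * b₂ = 1 := by rw [one_mul, inv_mul_cancel₀ hb₂]
  exact ⟨AlgEquiv.ofAlgHom _ _ (QuatAlg.tensorMix_comp_tensorMix hc' hd' he' hd he)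
    (QuatAlg.tensorMix_comp_tensorMix hc hd he hd' he')⟩

theorem stmt1 (F : Type*) [Field F] [CharP F 2] (a₁ a₂ : F) (b₁ b₂ : F)
    (hb₁ : b₁ ≠ 0) (hb₂ : b₂ ≠ 0) :
    Nonempty ((QuatAlg F a₁ b₁ ⊗[F] QuatAlg F a₂ b₂) ≃ₐ[F]
      (QuatAlg F a₁ (b₁ * b₂) ⊗[F] QuatAlg F (a₁ + a₂) b₂)) :=
  stmt1_general F a₁ a₂ b₁ b₂ hb₂
end

section
/- Let F be a field of characteristic ≠ 2, let n ≥ 2, and let a₁, …, a_{n−1}, b₁, b₂ ∈ Fˣ. Write τ = ⟨⟨a₁,…,a_{n−1}⟩⟩ for the (n−1)-fold Pfister form. If the quadratic form (−b₁)·τ ⊥ b₂·τ is isotropic, then the n-fold Pfister forms ⟨⟨b₁,a₁,…,a_{n−1}⟩⟩ and ⟨⟨b₂,a₁,…,a_{n−1}⟩⟩ are isometric. -/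
/-- The `n`-fold Pfister form `⟨⟨a₁,…,aₙ⟩⟩`: the diagonal quadratic form indexed by
subsets `S ⊆ {1,…,n}`, with the coefficient of the variable indexed by `S` equal to
`∏_{i ∈ S} (-aᵢ)`. -/
noncomputable def pfister (F : Type*) [Field F] {n : ℕ} (a : Fin n → F) :
    QuadraticForm F (Finset (Fin n) → F) :=
  QuadraticMap.weightedSumSquares F fun S : Finset (Fin n) => ∏ i ∈ S, (-a i)

/-- A quadratic form is hyperbolic if it is equivalent (isometric) to an orthogonal sum
of copies of the hyperbolic plane `⟨1, -1⟩`. -/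
def IsHyperbolic {F M : Type*} [Field F] [AddCommGroup M] [Module F M]
    (q : QuadraticForm F M) : Prop :=
  ∃ m : ℕ, QuadraticMap.Equivalent q
    (QuadraticMap.weightedSumSquares F fun p : Fin m × Fin 2 => if p.2 = 0 then (1 : F) else -1)

/-!
Splitting off the first slot gives `⟨⟨b, a₁, …⟩⟩ ≅ τ ⊥ (-b)·τ`, so it suffices that `b₁ / b₂` be a
similarity factor of `τ`, i.e. `(b₁ / b₂)·τ ≅ τ`. Pfister forms are round: every nonzero value
they represent is a similarity factor. This goes by induction on the number of slots, the key
point being that `1 - b` is a similarity factor of `q ⊥ (-b)·q`. An isotropic vector `(x₁, x₂)`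
gives `b₁ τ(x₁) = b₂ τ(x₂)`. If `τ(x₁) ≠ 0`, then `b₁ / b₂ = τ(x₂) / τ(x₁)` is a quotient of
values of `τ`; otherwise `τ` is isotropic, hence universal, and represents `b₁ / b₂` itself.
-/

open QuadraticMap

namespace QuadraticMap

theorem Equivalent.smul {R M M' : Type*} [CommSemiring R] [AddCommMonoid M] [Module R M]
    [AddCommMonoid M'] [Module R M'] {q : QuadraticForm R M} {q' : QuadraticForm R M'}
    (c : R) (h : q.Equivalent q') : (c • q).Equivalent (c • q') :=
  h.map fun f => ⟨f.toLinearEquiv, fun m => by simp [f.map_app]⟩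

theorem smul_prod {R M M' : Type*} [CommSemiring R] [AddCommMonoid M] [Module R M]
    [AddCommMonoid M'] [Module R M'] (c : R) (q : QuadraticForm R M) (q' : QuadraticForm R M') :
    c • q.prod q' = (c • q).prod (c • q') := by
  ext x
  simp [mul_add]

section weightedSumSquares

variable {R ι ι' : Type*} [CommSemiring R] [Fintype ι] [Fintype ι']

theorem smul_weightedSumSquares (c : R) (w : ι → R) :
    c • weightedSumSquares R w = weightedSumSquares R (c • w) := by
  ext x
  simp [Finset.mul_sum, mul_assoc]

theorem weightedSumSquares_comp_equivalent (e : ι ≃ ι') (w : ι' → R) :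
    (weightedSumSquares R (w ∘ e)).Equivalent (weightedSumSquares R w) :=
  ⟨⟨LinearEquiv.funCongrLeft R R e.symm, fun x => by
    simp only [weightedSumSquares_apply, smul_eq_mul, Function.comp_apply]
    rw [← e.sum_comp]
    simp [LinearEquiv.funCongrLeft_apply]⟩⟩

theorem weightedSumSquares_sumElim_equivalent (w : ι → R) (w' : ι' → R) :
    (weightedSumSquares R (Sum.elim w w')).Equivalent
      ((weightedSumSquares R w).prod (weightedSumSquares R w')) :=
  ⟨⟨LinearEquiv.sumArrowLequivProdArrow ι ι' R R, fun x => by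
    simp [Fintype.sum_sum_type, LinearEquiv.sumArrowLequivProdArrow_apply_fst,
      LinearEquiv.sumArrowLequivProdArrow_apply_snd]⟩⟩

end weightedSumSquares

theorem polar_weightedSumSquares_single {R ι : Type*} [CommRing R] [Fintype ι] [DecidableEq ι]
    (w : ι → R) (v : ι → R) (i : ι) :
    polar (weightedSumSquares R w) v (Pi.single i 1) = 2 * w i * v i := by
  simp only [polar, weightedSumSquares_apply, smul_eq_mul, ← Finset.sum_sub_distrib]
  rw [Finset.sum_eq_single i (fun j _ hj => by simp [hj]) (by simp)]
  simp only [Pi.add_apply, Pi.single_eq_same]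
  ring

theorem exists_apply_eq_of_polar_ne_zero {F M : Type*} [Field F] [AddCommGroup M] [Module F M]
    {Q : QuadraticForm F M} {v y : M} (hv : Q v = 0) (hvy : polar Q v y ≠ 0) (c : F) :
    ∃ x, Q x = c := by
  have hline : ∀ t : F, Q (t • v + y) = t * polar Q v y + Q y := fun t => by
    rw [QuadraticMap.map_add Q, QuadraticMap.map_smul, hv, polar_smul_left, smul_eq_mul,
      smul_eq_mul]
    ring
  exact ⟨((c - Q y) / polar Q v y) • v + y, by rw [hline]; field_simp; ring⟩

theorem exists_weightedSumSquares_eq_of_isotropic {F ι : Type*} [Field F] [Fintype ι]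
    (h2 : (2 : F) ≠ 0) {w : ι → F} (hw : ∀ i, w i ≠ 0) {v : ι → F} (hv : v ≠ 0)
    (hv0 : weightedSumSquares F w v = 0) (c : F) : ∃ x, weightedSumSquares F w x = c := by
  classical
  obtain ⟨i, hi⟩ := Function.ne_iff.mp hv
  refine exists_apply_eq_of_polar_ne_zero hv0 (y := Pi.single i 1) ?_ c
  rw [polar_weightedSumSquares_single]
  exact mul_ne_zero (mul_ne_zero h2 (hw i)) hi

variable {F M M' : Type*} [Field F] [AddCommGroup M] [Module F M] [AddCommGroup M'] [Module F M']

def IsSimilarityFactor (q : QuadraticForm F M) (c : F) : Prop :=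
  (c • q).Equivalent q

def IsRound (q : QuadraticForm F M) : Prop :=
  ∀ c : F, c ≠ 0 → (∃ x, q x = c) → IsSimilarityFactor q c

namespace IsSimilarityFactor

variable {q : QuadraticForm F M} {c d : F}

theorem mul (hc : IsSimilarityFactor q c) (hd : IsSimilarityFactor q d) :
    IsSimilarityFactor q (c * d) := by
  rw [IsSimilarityFactor, ← smul_smul]
  exact (hd.smul c).trans hc

theorem div (hc : IsSimilarityFactor q c) (hd : IsSimilarityFactor q d) (hd0 : d ≠ 0) :
    IsSimilarityFactor q (c / d) := by
  have hinv := Equivalent.smul d⁻¹ hd.symm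
  rw [smul_smul, inv_mul_cancel₀ hd0, one_smul] at hinv
  exact div_eq_mul_inv c d ▸ hc.mul hinv

theorem of_equivalent {q' : QuadraticForm F M'} (h : q.Equivalent q')
    (hc : IsSimilarityFactor q c) : IsSimilarityFactor q' c :=
  ((h.symm.smul c).trans hc).trans h

theorem smul (hc : IsSimilarityFactor q c) (d : F) : IsSimilarityFactor (d • q) c := by
  rw [IsSimilarityFactor, smul_comm]
  exact Equivalent.smul d hc

theorem prod {q' : QuadraticForm F M'} (hc : IsSimilarityFactor q c)
    (hc' : IsSimilarityFactor q' c) : IsSimilarityFactor (q.prod q') c := by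
  rw [IsSimilarityFactor, smul_prod]
  exact Equivalent.prod hc hc'

end IsSimilarityFactor

theorem isSimilarityFactor_one (q : QuadraticForm F M) : IsSimilarityFactor q 1 := by
  rw [IsSimilarityFactor, one_smul]

theorem isSimilarityFactor_mul_self {e : F} (he : e ≠ 0) (q : QuadraticForm F M) :
    IsSimilarityFactor q (e * e) :=
  ⟨⟨LinearEquiv.smulOfUnit (Units.mk0 e he), fun m => by
    simp [LinearEquiv.smulOfUnit, QuadraticMap.map_smul]⟩⟩

theorem Equivalent.smul_of_isSimilarityFactor_div {q : QuadraticForm F M} {c d : F} (hd : d ≠ 0)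
    (h : IsSimilarityFactor q (c / d)) : (c • q).Equivalent (d • q) := by
  have h' := Equivalent.smul d h
  rwa [smul_smul, mul_div_cancel₀ _ hd] at h'

theorem isSimilarityFactor_neg_prod_smul {b : F} (hb : b ≠ 0) (q : QuadraticForm F M) :
    IsSimilarityFactor (q.prod ((-b) • q)) (-b) := by
  rw [IsSimilarityFactor, smul_prod, smul_smul]
  exact ((Equivalent.refl _).prod (isSimilarityFactor_mul_self (neg_ne_zero.2 hb) q)).trans
    ⟨IsometryEquiv.prodComm _ _⟩

theorem isSimilarityFactor_one_sub_prod_smul {b : F} (hb : 1 - b ≠ 0) (q : QuadraticForm F M) :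
    IsSimilarityFactor (q.prod ((-b) • q)) (1 - b) := by
  have hinv : (1 - b)⁻¹ * (1 - b) = 1 := inv_mul_cancel₀ hb
  -- `q (x + b y) - b q (x + y) = (1 - b) (q x - b q y)`
  let e : (M × M) ≃ₗ[F] M × M :=
    { toFun v := (v.1 + b • v.2, v.1 + v.2)
      invFun w := ((1 - b)⁻¹ • (w.1 - b • w.2), (1 - b)⁻¹ • (w.2 - w.1))
      map_add' v w := by ext <;> dsimp <;> module
      map_smul' c v := by ext <;> dsimp <;> module
      left_inv v := Prod.ext (by linear_combination (norm := module) hinv • v.1)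
        (by linear_combination (norm := module) hinv • v.2)
      right_inv w := Prod.ext (by linear_combination (norm := module) hinv • w.1)
        (by linear_combination (norm := module) hinv • w.2) }
  refine ⟨⟨e, fun v => ?_⟩⟩
  simp only [e, prod_apply, smul_apply, QuadraticMap.map_add q, QuadraticMap.map_smul,
    polar_smul_right, smul_eq_mul]
  ring

theorem IsRound.of_equivalent {q : QuadraticForm F M} {q' : QuadraticForm F M'}
    (h : q.Equivalent q') (hq : IsRound q) : IsRound q' := by
  rintro c hc ⟨x, rfl⟩
  obtain ⟨f⟩ := h
  exact (hq _ hc ⟨f.symm x, f.symm.map_app x⟩).of_equivalent ⟨f⟩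

theorem IsRound.prod_smul {q : QuadraticForm F M} (hq : IsRound q) {b : F} (hb : b ≠ 0) :
    IsRound (q.prod ((-b) • q)) := by
  set Q := q.prod ((-b) • q)
  have hQ : ∀ e ≠ 0, (∃ z, q z = e) → IsSimilarityFactor Q e := fun e he hz =>
    (hq e he hz).prod ((hq e he hz).smul (-b))
  rintro c hc ⟨⟨x, y⟩, rfl⟩
  have hxy : Q (x, y) = q x - b * q y := by
    simp only [Q, prod_apply, smul_apply, smul_eq_mul]; ring
  rw [hxy] at hc ⊢
  by_cases hx : q x = 0
  · have hy : q y ≠ 0 := by rintro hy; simp [hx, hy] at hc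
    rw [hx, zero_sub, ← neg_mul]
    exact (isSimilarityFactor_neg_prod_smul hb q).mul (hQ _ hy ⟨y, rfl⟩)
  have hsplit : q x - b * q y = q x * (1 - b * (q y / q x)) := by field_simp
  rw [hsplit] at hc ⊢
  refine (hQ _ hx ⟨x, rfl⟩).mul ?_
  by_cases hy : q y = 0
  · simpa [hy] using isSimilarityFactor_one Q
  -- `c = q x * (1 - b f)` with `f = q y / q x` a similarity factor of `q`, and `Q ≅ q ⊥ (-b f)·q`
  have hf : IsSimilarityFactor q (q y / q x) :=
    (hq _ hy ⟨y, rfl⟩).div (hq _ hx ⟨x, rfl⟩) hx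
  have hQ' : (q.prod ((-(b * (q y / q x))) • q)).Equivalent Q := by
    refine (Equivalent.refl q).prod ?_
    rw [← neg_mul, ← smul_smul]
    exact Equivalent.smul (-b) hf
  exact (isSimilarityFactor_one_sub_prod_smul (right_ne_zero_of_mul hc) q).of_equivalent hQ'

end QuadraticMap

section Pfister

variable {F : Type*} [Field F]

noncomputable def finsetSuccEquiv (k : ℕ) :
    Finset (Fin k) ⊕ Finset (Fin k) ≃ Finset (Fin (k + 1)) where
  toFun := Sum.elim (fun S => S.map (Fin.succEmb k)) fun S => insert 0 (S.map (Fin.succEmb k))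
  invFun T :=
    let S := T.preimage Fin.succ (Fin.succ_injective k).injOn
    if 0 ∈ T then .inr S else .inl S
  left_inv := by
    rintro (S | S) <;> simp only [Sum.elim_inl, Sum.elim_inr, Finset.mem_insert, Finset.mem_map,
      Fin.coe_succEmb, Fin.succ_ne_zero, and_false, exists_false, or_false, ↓reduceIte, eq_comm,
      Sum.inl.injEq, Sum.inr.injEq] <;> ext <;> simp
  right_inv T := by
    by_cases h0 : (0 : Fin (k + 1)) ∈ T <;> ext i <;> cases i using Fin.cases <;>
      simp [h0, Fin.succ_ne_zero, eq_comm]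

theorem pfister_cons_equivalent {k : ℕ} (b : F) (a : Fin k → F) :
    (pfister F (Fin.cons b a)).Equivalent ((pfister F a).prod ((-b) • pfister F a)) := by
  have hweights : (fun T : Finset (Fin (k + 1)) => ∏ i ∈ T, -(Fin.cons b a : Fin (k + 1) → F) i) ∘
      finsetSuccEquiv k = Sum.elim (fun S => ∏ i ∈ S, -a i) ((-b) • fun S => ∏ i ∈ S, -a i) := by
    ext (S | S) <;> simp [finsetSuccEquiv, Fin.succ_ne_zero]
  rw [pfister, pfister, smul_weightedSumSquares]
  exact (weightedSumSquares_comp_equivalent _ _).symm.trans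
    (hweights ▸ weightedSumSquares_sumElim_equivalent _ _)

theorem pfister_isRound {k : ℕ} {a : Fin k → F} (ha : ∀ i, a i ≠ 0) : IsRound (pfister F a) := by
  induction k with
  | zero =>
    rintro c hc ⟨x, rfl⟩
    have hx : pfister F a x = x ∅ * x ∅ := by
      simp [pfister, Subsingleton.elim (default : Finset (Fin 0)) ∅]
    rw [hx] at hc ⊢
    exact isSimilarityFactor_mul_self (left_ne_zero_of_mul hc) _
  | succ k ih =>
    rw [← Fin.cons_self_tail a]
    exact ((ih fun i => ha i.succ).prod_smul (ha 0)).of_equivalent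
      (pfister_cons_equivalent _ _).symm

theorem exists_pfister_eq_of_isotropic (h2 : (2 : F) ≠ 0) {k : ℕ} {a : Fin k → F}
    (ha : ∀ i, a i ≠ 0) {v : Finset (Fin k) → F} (hv : v ≠ 0) (hv0 : pfister F a v = 0) (c : F) :
    ∃ x, pfister F a x = c :=
  exists_weightedSumSquares_eq_of_isotropic h2
    (fun _ => Finset.prod_ne_zero_iff.2 fun i _ => neg_ne_zero.2 (ha i)) hv hv0 c

end Pfister

theorem stmt11_general (F : Type*) [Field F] (hchar : ringChar F ≠ 2)
    (n : ℕ) (a : Fin (n - 1) → F) (ha : ∀ i, a i ≠ 0)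
    (b₁ b₂ : F) (hb₁ : b₁ ≠ 0) (hb₂ : b₂ ≠ 0)
    (hiso : ∃ x, x ≠ 0 ∧
      QuadraticMap.prod ((-b₁) • pfister F a) (b₂ • pfister F a) x = 0) :
    QuadraticMap.Equivalent (pfister F (Fin.cons b₁ a)) (pfister F (Fin.cons b₂ a)) := by
  set τ := pfister F a
  have hτ : IsRound τ := pfister_isRound ha
  obtain ⟨⟨x₁, x₂⟩, hx, hx0⟩ := hiso
  have hbal : b₁ * τ x₁ = b₂ * τ x₂ := by
    simp only [prod_apply, smul_apply, smul_eq_mul] at hx0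
    linear_combination -hx0
  have hfactor : IsSimilarityFactor τ (b₁ / b₂) := by
    by_cases h₁ : τ x₁ = 0
    · have h₂ : τ x₂ = 0 := by simpa [h₁, hb₂] using hbal.symm
      obtain ⟨v, hv, hv0⟩ : ∃ v, v ≠ 0 ∧ τ v = 0 := by
        by_cases hx₁ : x₁ = 0
        · exact ⟨x₂, fun h => hx (Prod.ext hx₁ h), h₂⟩
        · exact ⟨x₁, hx₁, h₁⟩
      exact hτ _ (div_ne_zero hb₁ hb₂)
        (exists_pfister_eq_of_isotropic (Ring.two_ne_zero hchar) ha hv hv0 _)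
    · have h₂ : τ x₂ ≠ 0 := by rintro h₂; simp [h₂, hb₁, h₁] at hbal
      rw [show b₁ / b₂ = τ x₂ / τ x₁ by rw [div_eq_div_iff hb₂ h₁]; linear_combination hbal]
      exact (hτ _ h₂ ⟨x₂, rfl⟩).div (hτ _ h₁ ⟨x₁, rfl⟩) h₁
  have hneg : ((-b₁) • τ).Equivalent ((-b₂) • τ) :=
    Equivalent.smul_of_isSimilarityFactor_div (neg_ne_zero.2 hb₂) (by rwa [neg_div_neg_eq])
  exact (pfister_cons_equivalent b₁ a).trans
    (((Equivalent.refl τ).prod hneg).trans (pfister_cons_equivalent b₂ a).symm)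

theorem stmt11 (F : Type*) [Field F] (hchar : ringChar F ≠ 2)
    (n : ℕ) (hn : 2 ≤ n) (a : Fin (n - 1) → F) (ha : ∀ i, a i ≠ 0)
    (b₁ b₂ : F) (hb₁ : b₁ ≠ 0) (hb₂ : b₂ ≠ 0)
    (hiso : ∃ x, x ≠ 0 ∧
      QuadraticMap.prod ((-b₁) • pfister F a) (b₂ • pfister F a) x = 0) :
    QuadraticMap.Equivalent (pfister F (Fin.cons b₁ a)) (pfister F (Fin.cons b₂ a)) :=
  stmt11_general F hchar n a ha b₁ b₂ hb₁ hb₂ hiso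
end

section
/- Let k be a field of characteristic ≠ 2, let n ≥ 2, and let F = k(X₁, …, X_{n−1}, Y₁, Y₂) be the rational function field in n+1 variables over k. Then the (n+1)-fold Pfister form ⟨⟨Y₁, −Y₂, X₁, …, X_{n−1}⟩⟩ is anisotropic over F. -/
/-- The rational function field `k(X₁, …, X_{n-1}, Y₁, Y₂)` in `(n-1) + 2` variables,
where the variable indexed by `0` is `Y₁`, the one indexed by `1` is `Y₂`, and the
remaining `n - 1` variables are `X₁, …, X_{n-1}`. -/
def RatFunc' (k : Type*) [Field k] (n : ℕ) : Type _ :=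
  FractionRing (MvPolynomial (Fin (n - 1 + 1 + 1)) k)

noncomputable instance (k : Type*) [Field k] (n : ℕ) : Field (RatFunc' k n) :=
  inferInstanceAs (Field (FractionRing (MvPolynomial (Fin (n - 1 + 1 + 1)) k)))

noncomputable instance (k : Type*) [Field k] (n : ℕ) : Algebra k (RatFunc' k n) :=
  inferInstanceAs (Algebra k (FractionRing (MvPolynomial (Fin (n - 1 + 1 + 1)) k)))

/-- The variables of the rational function field, as elements of it. -/
noncomputable def rvar (k : Type*) [Field k] (n : ℕ) (i : Fin (n - 1 + 1 + 1)) :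
    RatFunc' k n :=
  algebraMap (MvPolynomial (Fin (n - 1 + 1 + 1)) k)
    (FractionRing (MvPolynomial (Fin (n - 1 + 1 + 1)) k)) (MvPolynomial.X i)

/-- The slot vector `(Y₁, −Y₂, X₁, …, X_{n−1})` of the Pfister form. -/
noncomputable def slots (k : Type*) [Field k] (n : ℕ) : Fin (n - 1 + 1 + 1) → RatFunc' k n :=
  Fin.cons (rvar k n 0)
    (Fin.cons (-(rvar k n 1)) (fun i : Fin (n - 1) => rvar k n i.succ.succ))

/-!
Clearing denominators, it suffices to show that `∑_S c_S X^S p_S² ≠ 0` for polynomials `p_S`,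
not all zero, where `X^S = ∏_{i ∈ S} X_i` and the `c_S` are nonzero constants. In the
lexicographic order the leading exponent of `c_S X^S p_S²` is `χ_S + 2 deg p_S`, whose parity
pattern recovers `S`; so the nonzero terms have pairwise distinct leading monomials and cannot
cancel.
-/

theorem Finset.eq_of_sum_single_add_add_eq {σ : Type*} {S T : Finset σ} {a b : σ →₀ ℕ}
    (h : ∑ i ∈ S, Finsupp.single i 1 + (a + a) = ∑ i ∈ T, Finsupp.single i 1 + (b + b)) :
    S = T := by
  classical
  ext i
  have hi := DFunLike.congr_fun h i
  simp only [Finsupp.add_apply, Finsupp.finsetSum_apply, Finsupp.single_apply,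
    Finset.sum_ite_eq'] at hi
  split_ifs at hi <;> simp_all <;> omega

theorem QuadraticMap.anisotropic_weightedSumSquares_algebraMap {R K ι : Type*} [CommRing R]
    [IsDomain R] [Field K] [Algebra R K] [IsFractionRing R K] [Fintype ι] {w : ι → R}
    (hw : ∀ p : ι → R, ∑ i, w i * (p i * p i) = 0 → p = 0) :
    (weightedSumSquares K fun i => algebraMap R K (w i)).Anisotropic := by
  intro v hv
  rw [weightedSumSquares_apply] at hv
  obtain ⟨b, hb⟩ := IsLocalization.exist_integer_multiples (nonZeroDivisors R) Finset.univ v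
  choose p hp using fun i => hb i (Finset.mem_univ i)
  have hb0 : algebraMap R K b ≠ 0 := IsFractionRing.to_map_ne_zero_of_mem_nonZeroDivisors b.2
  have hbv : ∀ i, algebraMap R K (p i) = algebraMap R K b * v i := fun i => by
    rw [hp i, Algebra.smul_def]
  have hp0 : p = 0 := hw p <| IsFractionRing.injective R K <| by
    simp only [map_sum, map_mul, hbv, map_zero]
    rw [← mul_zero (algebraMap R K b * algebraMap R K b), ← hv, Finset.mul_sum]
    refine Finset.sum_congr rfl fun i _ => ?_
    rw [smul_eq_mul]
    ring
  funext i
  simpa [hp0, hb0] using (hbv i).symm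

namespace MvPolynomial

open AddMonoidAlgebra

variable {σ R : Type*} [LinearOrder σ] [CommRing R] [IsDomain R]

theorem supDegree_toLex_mul {p q : MvPolynomial σ R} (hp : p ≠ 0) (hq : q ≠ 0) :
    supDegree toLex (p * q) = supDegree toLex p + supDegree toLex q :=
  supDegree_mul toLex.injective toLex_add
    (mul_ne_zero ((leadingCoeff_ne_zero toLex.injective).2 hp)
      ((leadingCoeff_ne_zero toLex.injective).2 hq)) hp hq

theorem sum_monomial_mul_self_ne_zero {T : Finset (Finset σ)} (hT : T.Nonempty)
    {c : Finset σ → R} (hc : ∀ S ∈ T, c S ≠ 0)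
    {p : Finset σ → MvPolynomial σ R} (hp : ∀ S ∈ T, p S ≠ 0) :
    ∑ S ∈ T, monomial (∑ i ∈ S, Finsupp.single i 1) (c S) * (p S * p S) ≠ 0 := by
  have hmon : ∀ S ∈ T, monomial (∑ i ∈ S, Finsupp.single i 1) (c S) ≠ 0 := fun S hS =>
    monomial_eq_zero.not.2 (hc S hS)
  have hdeg : ∀ S ∈ T, supDegree toLex
      (monomial (∑ i ∈ S, Finsupp.single i 1) (c S) * (p S * p S)) =
      toLex (∑ i ∈ S, Finsupp.single i 1 +
        (ofLex (supDegree toLex (p S)) + ofLex (supDegree toLex (p S)))) := fun S hS => by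
    rw [supDegree_toLex_mul (hmon S hS) (mul_ne_zero (hp S hS) (hp S hS)),
      supDegree_toLex_mul (hp S hS) (hp S hS), ← single_eq_monomial,
      supDegree_single_ne_zero _ (hc S hS)]
    rfl
  refine sum_ne_zero_of_injOn_supDegree (D := toLex) hT
    (fun S hS => mul_ne_zero (hmon S hS) (mul_ne_zero (hp S hS) (hp S hS))) ?_
  intro S hS S' hS' h
  simp only [Function.comp_apply, hdeg S hS, hdeg S' hS'] at h
  exact Finset.eq_of_sum_single_add_add_eq (toLex.injective h)

theorem eq_zero_of_sum_monomial_mul_self_eq_zero [Fintype σ]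
    {c : Finset σ → R} (hc : ∀ S, c S ≠ 0) {p : Finset σ → MvPolynomial σ R}
    (h : ∑ S, monomial (∑ i ∈ S, Finsupp.single i 1) (c S) * (p S * p S) = 0) : p = 0 := by
  classical
  by_contra hne
  obtain ⟨S₀, hS₀⟩ := Function.ne_iff.1 hne
  refine sum_monomial_mul_self_ne_zero (T := Finset.univ.filter (p · ≠ 0))
    ⟨S₀, Finset.mem_filter.2 ⟨Finset.mem_univ _, by simpa using hS₀⟩⟩ (fun S _ => hc S)
    (fun S hS => (Finset.mem_filter.1 hS).2) ?_
  rwa [Finset.sum_filter_of_ne (p := (p · ≠ 0)) fun S _ hS hpS => hS (by simp [hpS])]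

end MvPolynomial

open MvPolynomial in
theorem pfister_anisotropic_of_eq_C_mul_X {k K : Type*} [Field k] [Field K] {m : ℕ}
    [Algebra (MvPolynomial (Fin m) k) K] [IsFractionRing (MvPolynomial (Fin m) k) K]
    {a : Fin m → K} (ha : ∀ i, ∃ c : k, c ≠ 0 ∧ a i = algebraMap _ K (C c * X i)) :
    (pfister K a).Anisotropic := by
  choose c hc ha using ha
  have hcoeff : ∀ S : Finset (Fin m), ∏ i ∈ S, -a i =
      algebraMap _ K (monomial (∑ i ∈ S, Finsupp.single i 1) (∏ i ∈ S, -c i)) := fun S => by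
    simp_rw [ha, ← map_neg, ← map_prod, monomial_sum_index, map_prod,
      ← Finset.prod_mul_distrib, ← neg_mul, ← map_neg, map_prod]
    rfl
  rw [pfister, funext hcoeff]
  exact QuadraticMap.anisotropic_weightedSumSquares_algebraMap fun p hp =>
    eq_zero_of_sum_monomial_mul_self_eq_zero
      (fun S => Finset.prod_ne_zero_iff.2 fun i _ => neg_ne_zero.2 (hc i)) hp

theorem stmt12_general (k : Type*) [Field k] (n : ℕ) :
    (pfister (RatFunc' k n) (slots k n)).Anisotropic := by
  refine pfister_anisotropic_of_eq_C_mul_X (k := k)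
    (K := FractionRing (MvPolynomial (Fin (n - 1 + 1 + 1)) k)) fun i => ?_
  refine Fin.cases ⟨1, one_ne_zero, ?_⟩
    (Fin.cases ⟨-1, neg_ne_zero.2 one_ne_zero, ?_⟩ fun j => ⟨1, one_ne_zero, ?_⟩) i
  all_goals simp only [map_one, map_neg, one_mul, neg_one_mul]; rfl

theorem stmt12 (k : Type*) [Field k] (hchar : ringChar k ≠ 2) (n : ℕ) (hn : 2 ≤ n) :
    (pfister (RatFunc' k n) (slots k n)).Anisotropic :=
  stmt12_general k n
end
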